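/- arXiv:2511.22728 — 3 statements merged into one kernel-verified Lean document; each statement's English description precedes it below -/
import Mathlib

section
/- Let P ∈ ℝ^{r×n}, Q ∈ ℝ^{(n-r)×n} satisfy PQᵀ = 0, QQᵀ = I, and let QAQᵀ be invertible with Π = Qᵀ(QAQᵀ)^{-1}Q. If the row space of C (i.e., range of Cᵀ) is contained in the range of Pᵀ, then CΠ = 0, and consequently the feedthrough matrix D̂ = −CΠB is zero. -/
/-!
Every column of `Cᵀ` is a combination of columns of `Pᵀ`, which `Q` annihilates because
`Q Pᵀ = (P Qᵀ)ᵀ = 0`; hence `Q Cᵀ = 0`, i.e. `C Qᵀ = 0`, and `C Π = (C Qᵀ) (Q A Qᵀ)⁻¹ Q = 0`.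
-/

open Matrix

theorem Matrix.mul_eq_zero_of_range_mulVecLin_le {R l m n o : Type*} [CommSemiring R]
    [Fintype m] [Fintype n] [Fintype o] [DecidableEq o]
    {Q : Matrix l m R} {M : Matrix m n R} {N : Matrix m o R}
    (hNM : LinearMap.range N.mulVecLin ≤ LinearMap.range M.mulVecLin) (hQM : Q * M = 0) :
    Q * N = 0 := by
  have hM : LinearMap.range M.mulVecLin ≤ LinearMap.ker Q.mulVecLin :=
    LinearMap.range_le_ker_iff.mpr (by rw [← mulVecLin_mul, hQM, mulVecLin_zero])
  apply Matrix.toLin'.injective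
  rw [Matrix.toLin'_apply', mulVecLin_mul, map_zero]
  exact LinearMap.range_le_ker_iff.mp (hNM.trans hM)

theorem feedthrough_zero_of_output_range_general (n r m p : ℕ)
    (A : Matrix (Fin n) (Fin n) ℝ) (B : Matrix (Fin n) (Fin m) ℝ)
    (C : Matrix (Fin p) (Fin n) ℝ)
    (P : Matrix (Fin r) (Fin n) ℝ) (Q : Matrix (Fin (n - r)) (Fin n) ℝ)
    (hPQ : P * Qᵀ = 0)
    (hrange : LinearMap.range Cᵀ.mulVecLin ≤ LinearMap.range Pᵀ.mulVecLin) :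
    C * (Qᵀ * (Q * A * Qᵀ)⁻¹ * Q) = 0 ∧
      -(C * (Qᵀ * (Q * A * Qᵀ)⁻¹ * Q) * B) = 0 := by
  have hQP : Q * Pᵀ = 0 := by simpa using congrArg transpose hPQ
  have hCQ : C * Qᵀ = 0 := by
    simpa using congrArg transpose (mul_eq_zero_of_range_mulVecLin_le hrange hQP)
  have hCProj : C * (Qᵀ * (Q * A * Qᵀ)⁻¹ * Q) = 0 := by
    rw [← Matrix.mul_assoc, ← Matrix.mul_assoc, hCQ, Matrix.zero_mul, Matrix.zero_mul]
  exact ⟨hCProj, by rw [hCProj, Matrix.zero_mul, neg_zero]⟩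

/-- If `range(Cᵀ) ⊆ range(Pᵀ)`, with `P Qᵀ = 0`, `Q Qᵀ = I`, and `Q A Qᵀ`
invertible, then `C Π = 0` and hence the feedthrough `D̂ = -C Π B` vanishes. -/
theorem feedthrough_zero_of_output_range (n r m p : ℕ) (hr : r ≤ n)
    (A : Matrix (Fin n) (Fin n) ℝ) (B : Matrix (Fin n) (Fin m) ℝ)
    (C : Matrix (Fin p) (Fin n) ℝ)
    (P : Matrix (Fin r) (Fin n) ℝ) (Q : Matrix (Fin (n - r)) (Fin n) ℝ)
    (hP : P * Pᵀ = 1) (hQ : Q * Qᵀ = 1) (hPQ : P * Qᵀ = 0)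
    (hInv : IsUnit (Q * A * Qᵀ))
    (hrange : LinearMap.range Cᵀ.mulVecLin ≤ LinearMap.range Pᵀ.mulVecLin) :
    C * (Qᵀ * (Q * A * Qᵀ)⁻¹ * Q) = 0 ∧
      -(C * (Qᵀ * (Q * A * Qᵀ)⁻¹ * Q) * B) = 0 :=
  feedthrough_zero_of_output_range_general n r m p A B C P Q hPQ hrange
end

section
/- Let A ∈ ℝ^{n×n} be Hurwitz, let X be the symmetric positive definite solution of AᵀX + XA = −I, and let X = LLᵀ be its Cholesky factorization with L invertible. Then the transformed matrix Ã = LᵀA L^{-ᵀ} is negative definite in the sense that vᵀÃv < 0 for all nonzero v ∈ ℝⁿ. -/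
/-!
Conjugating the Lyapunov equation `Aᵀ X + X A = -1` by `L⁻¹` on the left and `L⁻ᵀ` on the right
turns it into `Ã + Ãᵀ = -(L⁻¹ L⁻ᵀ)`. The right-hand side is negative definite since `L⁻¹` is
invertible, and the quadratic form `v ↦ vᵀ Ã v` only sees the symmetric part `(Ã + Ãᵀ) / 2`.
-/

open Matrix

/-- `A` is Hurwitz: every eigenvalue (over `ℂ`) has strictly negative real part. -/
def IsHurwitz {m : Type*} [Fintype m] [DecidableEq m] (A : Matrix m m ℝ) : Prop :=
  ∀ μ ∈ spectrum ℂ (A.map (algebraMap ℝ ℂ)), μ.re < 0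

namespace Matrix

variable {m R : Type*} [Fintype m]

theorem dotProduct_add_transpose_mulVec_self [CommRing R] (M : Matrix m m R) (v : m → R) :
    v ⬝ᵥ ((M + Mᵀ) *ᵥ v) = 2 * (v ⬝ᵥ (M *ᵥ v)) := by
  rw [add_mulVec, dotProduct_add, mulVec_transpose, dotProduct_comm v (v ᵥ* M), ← dotProduct_mulVec]
  ring

variable [DecidableEq m]

theorem add_transpose_transpose_mul_mul_inv_transpose [CommRing R] (A : Matrix m m R)
    {L : Matrix m m R} (hL : IsUnit L) :
    Lᵀ * A * (L⁻¹)ᵀ + (Lᵀ * A * (L⁻¹)ᵀ)ᵀ = L⁻¹ * (Aᵀ * (L * Lᵀ) + L * Lᵀ * A) * (L⁻¹)ᵀ := by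
  have hLdet : IsUnit L.det := (isUnit_iff_isUnit_det L).mp hL
  have hinv_mul : L⁻¹ * L = 1 := nonsing_inv_mul L hLdet
  have htr_mul : Lᵀ * (L⁻¹)ᵀ = 1 := by rw [← transpose_mul, hinv_mul, transpose_one]
  calc Lᵀ * A * (L⁻¹)ᵀ + (Lᵀ * A * (L⁻¹)ᵀ)ᵀ
      = (L⁻¹ * L) * (Lᵀ * A * (L⁻¹)ᵀ) + (L⁻¹ * Aᵀ * L) * (Lᵀ * (L⁻¹)ᵀ) := by
        simp only [hinv_mul, htr_mul, one_mul, mul_one, transpose_mul, transpose_transpose,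
          Matrix.mul_assoc]
    _ = L⁻¹ * (Aᵀ * (L * Lᵀ) + L * Lᵀ * A) * (L⁻¹)ᵀ := by noncomm_ring

theorem posDef_inv_mul_inv_transpose {L : Matrix m m ℝ} (hL : IsUnit L) :
    (L⁻¹ * (L⁻¹)ᵀ).PosDef := by
  rw [← conjTranspose_eq_transpose_of_trivial]
  exact PosDef.mul_conjTranspose_self _
    (vecMul_injective_of_isUnit (isUnit_nonsing_inv_iff.mpr hL))

end Matrix

theorem transformed_negdef_general (n : ℕ) (A X L : Matrix (Fin n) (Fin n) ℝ)
    (hLyap : Aᵀ * X + X * A = -1)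
    (hL : IsUnit L) (hChol : X = L * Lᵀ) :
    ∀ v : Fin n → ℝ, v ≠ 0 → v ⬝ᵥ ((Lᵀ * A * (L⁻¹)ᵀ) *ᵥ v) < 0 := by
  intro v hv
  have hsym := add_transpose_transpose_mul_mul_inv_transpose A hL
  rw [← hChol, hLyap, mul_neg, mul_one, neg_mul] at hsym
  have hpos := (posDef_inv_mul_inv_transpose hL).dotProduct_mulVec_pos hv
  rw [star_trivial] at hpos
  have hform := dotProduct_add_transpose_mulVec_self (Lᵀ * A * (L⁻¹)ᵀ) v
  rw [hsym, neg_mulVec, dotProduct_neg] at hform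
  linarith

/-- If `X = L Lᵀ ≻ 0` solves `Aᵀ X + X A = -I` with `L` invertible, then
`Ã = Lᵀ A L⁻ᵀ` satisfies `vᵀ Ã v < 0` for all `v ≠ 0`. -/
theorem transformed_negdef (n : ℕ) (A X L : Matrix (Fin n) (Fin n) ℝ)
    (hA : IsHurwitz A) (hX : X.PosDef) (hLyap : Aᵀ * X + X * A = -1)
    (hL : IsUnit L) (hChol : X = L * Lᵀ) :
    ∀ v : Fin n → ℝ, v ≠ 0 → v ⬝ᵥ ((Lᵀ * A * (L⁻¹)ᵀ) *ᵥ v) < 0 :=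
  transformed_negdef_general n A X L hLyap hL hChol
end

section
/- Let A ∈ ℝ^{n×n} have negative definite symmetric part, and let P, Q have orthonormal rows with PQᵀ = 0 and [P;Q] orthogonal. Then the singular perturbation reduced matrix Â := PAPᵀ − PAΠAPᵀ, where Π = Qᵀ(QAQᵀ)^{-1}Q, has negative definite symmetric part, and hence is Hurwitz. -/
/-!
Write `Π = Qᵀ (Q A Qᵀ)⁻¹ Q` and `D = Pᵀ - Π A Pᵀ`. Since `Πᵀ A Π = Πᵀ`, expanding gives
`Â = Dᵀ A D`, and `P D = 1` because `P Π = 0`; so `wᵀ Â w = (D w)ᵀ A (D w) < 0` for `w ≠ 0`.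
A real matrix `M` with negative definite quadratic form is Hurwitz: for an eigenpair `(μ, x + i y)`
over `ℂ`, `Re (z* M z) = xᵀ M x + yᵀ M y < 0` while also `Re (z* M z) = Re μ · ‖z‖²`.
-/

open Matrix

namespace Matrix

section SchurComplement

variable {R : Type*} [CommRing R] {n m r : Type*} [Fintype n] [Fintype m] [DecidableEq m]

noncomputable def schurProj (A : Matrix n n R) (Q : Matrix m n R) : Matrix n n R :=
  Qᵀ * (Q * A * Qᵀ)⁻¹ * Q

noncomputable def reducedMatrix (A : Matrix n n R) (P : Matrix r n R) (Q : Matrix m n R) :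
    Matrix r r R :=
  P * A * Pᵀ - P * A * schurProj A Q * A * Pᵀ

/- No invertibility is needed: a singular `B` has `B⁻¹ = 0`. -/
theorem transpose_nonsing_inv_mul_mul_nonsing_inv (B : Matrix m m R) :
    B⁻¹ᵀ * B * B⁻¹ = B⁻¹ᵀ := by
  by_cases hB : IsUnit B.det
  · rw [Matrix.mul_assoc, mul_nonsing_inv B hB, Matrix.mul_one]
  · simp [nonsing_inv_apply_not_isUnit B hB]

theorem transpose_schurProj_mul_mul (A : Matrix n n R) (Q : Matrix m n R) :
    (schurProj A Q)ᵀ * A * schurProj A Q = (schurProj A Q)ᵀ := by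
  calc (schurProj A Q)ᵀ * A * schurProj A Q
      = Qᵀ * ((Q * A * Qᵀ)⁻¹ᵀ * (Q * A * Qᵀ) * (Q * A * Qᵀ)⁻¹) * Q := by
        simp only [schurProj, transpose_mul, transpose_transpose, Matrix.mul_assoc]
    _ = (schurProj A Q)ᵀ := by
        rw [transpose_nonsing_inv_mul_mul_nonsing_inv]
        simp only [schurProj, transpose_mul, transpose_transpose, Matrix.mul_assoc]

theorem reducedMatrix_eq_transpose_mul_mul (A : Matrix n n R) (P : Matrix r n R)
    (Q : Matrix m n R) :
    reducedMatrix A P Q = (Pᵀ - schurProj A Q * A * Pᵀ)ᵀ * A * (Pᵀ - schurProj A Q * A * Pᵀ) := by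
  have hproj : P * (Aᵀ * ((schurProj A Q)ᵀ * (A * (schurProj A Q * (A * Pᵀ)))))
      = P * (Aᵀ * ((schurProj A Q)ᵀ * (A * Pᵀ))) := by
    simpa only [Matrix.mul_assoc] using
      congrArg (fun X => P * (Aᵀ * (X * (A * Pᵀ)))) (transpose_schurProj_mul_mul A Q)
  simp only [reducedMatrix, transpose_sub, transpose_mul, transpose_transpose, Matrix.sub_mul,
    Matrix.mul_sub, Matrix.mul_assoc, hproj]
  abel

theorem mul_sub_schurProj_mul_eq_one {A : Matrix n n R} {P : Matrix r n R} {Q : Matrix m n R}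
    [DecidableEq r] (hP : P * Pᵀ = 1) (hPQ : P * Qᵀ = 0) :
    P * (Pᵀ - schurProj A Q * A * Pᵀ) = 1 := by
  simp [Matrix.mul_sub, hP, schurProj, ← Matrix.mul_assoc, hPQ]

end SchurComplement

section NegDef

variable {n k : Type*} [Fintype n] [Fintype k]

def IsNegDefQuad (M : Matrix n n ℝ) : Prop :=
  ∀ v : n → ℝ, v ≠ 0 → v ⬝ᵥ (M *ᵥ v) < 0

theorem IsNegDefQuad.quad_nonpos {M : Matrix n n ℝ} (hM : M.IsNegDefQuad) (v : n → ℝ) :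
    v ⬝ᵥ (M *ᵥ v) ≤ 0 := by
  rcases eq_or_ne v 0 with rfl | hv
  · simp
  · exact (hM v hv).le

theorem IsNegDefQuad.transpose_mul_mul {A : Matrix n n ℝ} (hA : A.IsNegDefQuad)
    [DecidableEq k] {D : Matrix n k ℝ} {L : Matrix k n ℝ} (hLD : L * D = 1) :
    (Dᵀ * A * D).IsNegDefQuad := by
  intro w hw
  have hDw : D *ᵥ w ≠ 0 := fun h => hw <| by
    rw [← one_mulVec w, ← hLD, ← mulVec_mulVec, h, mulVec_zero]
  rw [← mulVec_mulVec, ← mulVec_mulVec, dotProduct_mulVec, vecMul_transpose]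
  exact hA _ hDw

theorem re_star_dotProduct_map_mulVec (M : Matrix n n ℝ) (z : n → ℂ) :
    (star z ⬝ᵥ (M.map (algebraMap ℝ ℂ) *ᵥ z)).re
      = (fun i => (z i).re) ⬝ᵥ (M *ᵥ fun i => (z i).re)
        + (fun i => (z i).im) ⬝ᵥ (M *ᵥ fun i => (z i).im) := by
  simp only [dotProduct, mulVec, map_apply, Complex.re_sum, Pi.star_apply, Finset.mul_sum,
    ← Finset.sum_add_distrib]
  refine Finset.sum_congr rfl fun i _ => Finset.sum_congr rfl fun j _ => ?_
  simp only [Complex.mul_re, Complex.mul_im, RCLike.star_def, Complex.conj_re, Complex.conj_im,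
    Complex.coe_algebraMap, Complex.ofReal_re, Complex.ofReal_im]
  ring

theorem IsNegDefQuad.re_star_dotProduct_map_mulVec_neg {M : Matrix n n ℝ} (hM : M.IsNegDefQuad)
    {z : n → ℂ} (hz : z ≠ 0) : (star z ⬝ᵥ (M.map (algebraMap ℝ ℂ) *ᵥ z)).re < 0 := by
  rw [re_star_dotProduct_map_mulVec]
  by_cases hre : (fun i => (z i).re) = 0
  · have him : (fun i => (z i).im) ≠ 0 := fun him => hz <|
      funext fun i => Complex.ext (congrFun hre i) (congrFun him i)
    linarith [hM.quad_nonpos (fun i => (z i).re), hM _ him]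
  · linarith [hM _ hre, hM.quad_nonpos (fun i => (z i).im)]

open ComplexOrder in
theorem IsNegDefQuad.isHurwitz [DecidableEq n] {M : Matrix n n ℝ} (hM : M.IsNegDefQuad) :
    IsHurwitz M := by
  intro μ hμ
  rw [← spectrum_toLin', ← Module.End.hasEigenvalue_iff_mem_spectrum] at hμ
  obtain ⟨z, hz⟩ := hμ.exists_hasEigenvector
  have hMz : M.map (algebraMap ℝ ℂ) *ᵥ z = μ • z := by
    simpa using hz.apply_eq_smul
  obtain ⟨hnorm_re, hnorm_im⟩ := Complex.pos_iff.1 (dotProduct_star_self_pos_iff.2 hz.2)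
  have hform := hM.re_star_dotProduct_map_mulVec_neg hz.2
  rw [hMz, dotProduct_smul, smul_eq_mul, Complex.mul_re, ← hnorm_im] at hform
  nlinarith

end NegDef

end Matrix

theorem reduced_matrix_hurwitz_general (n r : ℕ)
    (A : Matrix (Fin n) (Fin n) ℝ)
    (hneg : ∀ v : Fin n → ℝ, v ≠ 0 → v ⬝ᵥ (A *ᵥ v) < 0)
    (P : Matrix (Fin r) (Fin n) ℝ) (Q : Matrix (Fin (n - r)) (Fin n) ℝ)
    (hP : P * Pᵀ = 1) (hPQ : P * Qᵀ = 0) :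
    (∀ w : Fin r → ℝ, w ≠ 0 →
      w ⬝ᵥ ((P * A * Pᵀ - P * A * (Qᵀ * (Q * A * Qᵀ)⁻¹ * Q) * A * Pᵀ) *ᵥ w) < 0) ∧
    IsHurwitz (P * A * Pᵀ - P * A * (Qᵀ * (Q * A * Qᵀ)⁻¹ * Q) * A * Pᵀ) := by
  have hred : (reducedMatrix A P Q).IsNegDefQuad := by
    rw [reducedMatrix_eq_transpose_mul_mul]
    exact IsNegDefQuad.transpose_mul_mul hneg (mul_sub_schurProj_mul_eq_one hP hPQ)
  exact ⟨hred, hred.isHurwitz⟩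

/-- If `A` has negative definite symmetric part, the singular-perturbation reduced
matrix `Â = P A Pᵀ - P A Π A Pᵀ`, with `Π = Qᵀ (Q A Qᵀ)⁻¹ Q`, also has negative
definite symmetric part, hence is Hurwitz. -/
theorem reduced_matrix_hurwitz (n r : ℕ) (hr : r ≤ n)
    (A : Matrix (Fin n) (Fin n) ℝ)
    (hneg : ∀ v : Fin n → ℝ, v ≠ 0 → v ⬝ᵥ (A *ᵥ v) < 0)
    (P : Matrix (Fin r) (Fin n) ℝ) (Q : Matrix (Fin (n - r)) (Fin n) ℝ)
    (hP : P * Pᵀ = 1) (hQ : Q * Qᵀ = 1) (hPQ : P * Qᵀ = 0)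
    (hres : Pᵀ * P + Qᵀ * Q = 1) :
    (∀ w : Fin r → ℝ, w ≠ 0 →
      w ⬝ᵥ ((P * A * Pᵀ - P * A * (Qᵀ * (Q * A * Qᵀ)⁻¹ * Q) * A * Pᵀ) *ᵥ w) < 0) ∧
    IsHurwitz (P * A * Pᵀ - P * A * (Qᵀ * (Q * A * Qᵀ)⁻¹ * Q) * A * Pᵀ) :=
  reduced_matrix_hurwitz_general n r A hneg P Q hP hPQ
end
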